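/- Let H be an N×N real symmetric tridiagonal matrix with N ≥ 2 whose eigenvalues λ_1 < λ_2 < ⋯ < λ_N are pairwise distinct. For each i set M_i = λ_i I_N − H. Then for every i ∈ {1, …, N}: 0 ≤ 2 ∑_{1 ≤ k < ℓ ≤ N, ℓ−k > 1} det((M_i)_{k|k}) · det((M_i)_{ℓ|ℓ}) ≤ ∏_{j ≠ i} (λ_i − λ_j)². -/

import Mathlib

/-!
Fix `i` and write `M = M_i`, which is symmetric and singular. Since `M` is singular, every
2×2 minor of `adj M` vanishes, and since `adj M` is symmetric, its diagonal entries
`d_k = det M_{k|k}` therefore all have the same sign. Jacobi's formula for the derivative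
of the characteristic polynomial gives
`∑ d_k = tr (adj M) = χ_H'(λ_i) = ∏_{j ≠ i} (λ_i - λ_j)`.
Since all the products `d_k d_ℓ` are nonnegative, twice their sum over any set of pairs
`k < ℓ` lies between `0` and `(∑ d_k)²`.
-/

open Polynomial Matrix Finset

namespace Matrix

section CommRing

variable {n R : Type*} [Fintype n] [DecidableEq n] [CommRing R]

theorem derivative_det (M : Matrix n n R[X]) :
    derivative M.det = ∑ k, (M.updateCol k fun i => derivative (M i k)).det := by
  simp only [det_apply', map_sum, derivative_intCast_mul, derivative_prod_finset, mul_sum]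
  rw [sum_comm]
  refine sum_congr rfl fun k _ => sum_congr rfl fun σ _ => ?_
  rw [← mul_prod_erase univ _ (mem_univ k), updateCol_self, mul_comm (derivative _)]
  congr 2
  exact prod_congr rfl fun i hi => (updateCol_ne (ne_of_mem_erase hi)).symm

theorem derivative_charmatrix_apply (A : Matrix n n R) (i k : n) :
    derivative (charmatrix A i k) = (Pi.single k 1 : n → R[X]) i := by
  rcases eq_or_ne i k with rfl | hik <;> simp [*]

theorem eval_derivative_charpoly (A : Matrix n n R) (t : R) :
    (derivative A.charpoly).eval t = trace (adjugate (scalar n t - A)) := by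
  have hmap : (evalRingHom t).mapMatrix (charmatrix Aᵀ) = (scalar n t - A)ᵀ := by
    ext i j
    rcases eq_or_ne i j with rfl | hij
    · simp
    · simp [Ne.symm hij]
  rw [← charpoly_transpose, charpoly, derivative_det, eval_finsetSum, trace]
  refine sum_congr rfl fun k _ => ?_
  simp only [derivative_charmatrix_apply]
  rw [← coe_evalRingHom, RingHom.map_det, RingHom.mapMatrix_apply, map_updateCol,
    ← RingHom.mapMatrix_apply, hmap, diag_apply, adjugate_apply, updateCol_transpose,
    det_transpose]
  congr 2
  ext i
  rcases eq_or_ne i k with rfl | hik <;> simp [*]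

end CommRing

section Field

variable {n K : Type*} [Fintype n] [DecidableEq n] [Field K]

theorem adjugate_apply_eq_zero_of_mulVec_eq_zero {A : Matrix n n K} {v : n → K}
    (hv : A *ᵥ v = 0) (hv0 : v ≠ 0) {l : n} (hvl : v l = 0) (j : n) :
    adjugate A l j = 0 := by
  -- replacing row `j` of `A` by the unit row `e_l` keeps `v` in the kernel, as `v l = 0`
  rw [adjugate_apply, ← exists_mulVec_eq_zero_iff]
  refine ⟨v, hv0, funext fun r => ?_⟩
  rcases eq_or_ne r j with rfl | hrj
  · simp [mulVec, hvl]
  · simpa [mulVec, hrj] using congrFun hv r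

theorem adjugate_mul_adjugate_eq_of_det_eq_zero {A : Matrix n n K} (hA : A.det = 0) (k l : n) :
    adjugate A k k * adjugate A l l = adjugate A k l * adjugate A l k := by
  set B := adjugate A
  by_contra hne
  -- a combination of two columns of `adj A`, hence in `ker A`, vanishing at `l` but not at `k`
  set z := B *ᵥ (B l l • Pi.single k 1 - B l k • Pi.single l 1) with hz
  have hz_apply : ∀ m, z m = B l l * B m k - B l k * B m l := fun m => by
    simp [hz, mulVec_sub, mulVec_smul]
  have hAz : A *ᵥ z = 0 := by
    rw [hz, mulVec_mulVec, mul_adjugate, hA, zero_smul, zero_mulVec]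
  have hz0 : z ≠ 0 := fun h => hne <| by
    have hzk : z k = 0 := by rw [h, Pi.zero_apply]
    rw [hz_apply] at hzk
    linear_combination hzk
  have hzl : z l = 0 := by rw [hz_apply]; ring
  have hBll : B l l = 0 := adjugate_apply_eq_zero_of_mulVec_eq_zero hAz hz0 hzl l
  have hBlk : B l k = 0 := adjugate_apply_eq_zero_of_mulVec_eq_zero hAz hz0 hzl k
  exact hne (by rw [hBll, hBlk, mul_zero, mul_zero])

theorem IsSymm.adjugate_apply_self_mul_nonneg [LinearOrder K] [IsStrictOrderedRing K]
    {A : Matrix n n K} (hA : A.IsSymm) (hdet : A.det = 0) (k l : n) :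
    0 ≤ A.adjugate k k * A.adjugate l l := by
  rw [adjugate_mul_adjugate_eq_of_det_eq_zero hdet, hA.adjugate.apply k l]
  exact mul_self_nonneg _

end Field

end Matrix

theorem Finset.two_mul_sum_mul_le_sq_sum {ι R : Type*} [Fintype ι] [CommSemiring R]
    [PartialOrder R] [IsOrderedRing R] {d : ι → R} (hd : ∀ k l, 0 ≤ d k * d l)
    {S : Finset (ι × ι)} (hS : ∀ p ∈ S, p.swap ∉ S) :
    2 * ∑ p ∈ S, d p.1 * d p.2 ≤ (∑ k, d k) ^ 2 := by
  classical
  set swap := (Equiv.prodComm ι ι).toEmbedding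
  have hdisj : Disjoint S (S.map swap) := by
    refine disjoint_left.mpr fun p hp hp' => ?_
    obtain ⟨q, hq, rfl⟩ := mem_map.mp hp'
    exact hS q hq hp
  calc 2 * ∑ p ∈ S, d p.1 * d p.2
      = ∑ p ∈ S ∪ S.map swap, d p.1 * d p.2 := by
        rw [sum_union hdisj, sum_map, two_mul]
        congr 1
        exact sum_congr rfl fun p _ => mul_comm _ _
    _ ≤ ∑ p : ι × ι, d p.1 * d p.2 :=
        sum_le_sum_of_subset_of_nonneg (subset_univ _) fun p _ _ => hd _ _
    _ = (∑ k, d k) ^ 2 := by rw [sq, sum_mul_sum, Fintype.sum_prod_type]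

theorem tridiagonal_gap_minor_sum_bounds_general {n : ℕ}
    (H : Matrix (Fin (n + 2)) (Fin (n + 2)) ℝ)
    (hsymm : H.IsSymm)
    (lam : Fin (n + 2) → ℝ)
    (hchar : H.charpoly = ∏ j, (Polynomial.X - Polynomial.C (lam j)))
    (M : Fin (n + 2) → Matrix (Fin (n + 2)) (Fin (n + 2)) ℝ)
    (hM : ∀ i, M i = lam i • (1 : Matrix (Fin (n + 2)) (Fin (n + 2)) ℝ) - H)
    (i : Fin (n + 2)) :
    0 ≤ 2 * ∑ p ∈ Finset.univ.filter
            (fun p : Fin (n + 2) × Fin (n + 2) => (p.1 : ℕ) + 1 < (p.2 : ℕ)),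
          ((M i).submatrix p.1.succAbove p.1.succAbove).det
            * ((M i).submatrix p.2.succAbove p.2.succAbove).det
    ∧ 2 * ∑ p ∈ Finset.univ.filter
            (fun p : Fin (n + 2) × Fin (n + 2) => (p.1 : ℕ) + 1 < (p.2 : ℕ)),
          ((M i).submatrix p.1.succAbove p.1.succAbove).det
            * ((M i).submatrix p.2.succAbove p.2.succAbove).det
        ≤ ∏ j ∈ Finset.univ.erase i, (lam i - lam j) ^ 2 := by
  have hnodal : H.charpoly = Lagrange.nodal univ lam := hchar
  have hMi : M i = scalar _ (lam i) - H := by rw [hM, scalar_apply, smul_one_eq_diagonal]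
  have hsymmM : (M i).IsSymm := by rw [hM]; exact (isSymm_one.smul _).sub hsymm
  have hdet : (M i).det = 0 := by
    rw [hMi, ← eval_charpoly, hnodal, Lagrange.eval_nodal_at_node (mem_univ i)]
  have htrace : trace (adjugate (M i)) = ∏ j ∈ univ.erase i, (lam i - lam j) := by
    rw [hMi, ← eval_derivative_charpoly, hnodal,
      Lagrange.eval_nodal_derivative_eval_node_eq (mem_univ i), Lagrange.eval_nodal]
  have hminor : ∀ k, ((M i).submatrix k.succAbove k.succAbove).det = adjugate (M i) k k := by
    intro k
    rw [adjugate_fin_succ_eq_det_submatrix, Even.neg_one_pow ⟨k, rfl⟩, one_mul]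
  have hprod := hsymmM.adjugate_apply_self_mul_nonneg hdet
  simp only [hminor]
  refine ⟨mul_nonneg zero_le_two (sum_nonneg fun p _ => hprod _ _), ?_⟩
  calc _ ≤ (trace (adjugate (M i))) ^ 2 :=
        two_mul_sum_mul_le_sq_sum hprod fun p hp hp' => by
          simp only [mem_filter, mem_univ, true_and, Prod.fst_swap, Prod.snd_swap] at hp hp'
          omega
    _ = _ := by rw [htrace, prod_pow]

/-- Let `H` be an `N×N` real symmetric tridiagonal matrix (`N ≥ 2`)
with pairwise distinct eigenvalues `λ_1 < ⋯ < λ_N`, and set `M_i = λ_i I − H`.  Then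
for every `i`:
`0 ≤ 2 ∑_{ℓ−k>1} det((M_i)_{k|k}) · det((M_i)_{ℓ|ℓ}) ≤ ∏_{j≠i} (λ_i − λ_j)²`. -/
theorem tridiagonal_gap_minor_sum_bounds {n : ℕ}
    (H : Matrix (Fin (n + 2)) (Fin (n + 2)) ℝ)
    (hsymm : H.IsSymm)
    (htri : ∀ i j : Fin (n + 2), (i : ℕ) + 1 < (j : ℕ) → H i j = 0)
    (lam : Fin (n + 2) → ℝ) (hmono : StrictMono lam)
    (hchar : H.charpoly = ∏ j, (Polynomial.X - Polynomial.C (lam j)))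
    (M : Fin (n + 2) → Matrix (Fin (n + 2)) (Fin (n + 2)) ℝ)
    (hM : ∀ i, M i = lam i • (1 : Matrix (Fin (n + 2)) (Fin (n + 2)) ℝ) - H)
    (i : Fin (n + 2)) :
    0 ≤ 2 * ∑ p ∈ Finset.univ.filter
            (fun p : Fin (n + 2) × Fin (n + 2) => (p.1 : ℕ) + 1 < (p.2 : ℕ)),
          ((M i).submatrix p.1.succAbove p.1.succAbove).det
            * ((M i).submatrix p.2.succAbove p.2.succAbove).det
    ∧ 2 * ∑ p ∈ Finset.univ.filter
            (fun p : Fin (n + 2) × Fin (n + 2) => (p.1 : ℕ) + 1 < (p.2 : ℕ)),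
          ((M i).submatrix p.1.succAbove p.1.succAbove).det
            * ((M i).submatrix p.2.succAbove p.2.succAbove).det
        ≤ ∏ j ∈ Finset.univ.erase i, (lam i - lam j) ^ 2 :=
  tridiagonal_gap_minor_sum_bounds_general H hsymm lam hchar M hM i
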